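/- For every θ ∈ ℂ, the subspace M(θ) has dimension 1; moreover M(∞) = ℂA_D has dimension 1. -/

import Mathlib

open Matrix Polynomial BigOperators

noncomputable section

variable {X : Type*} [Fintype X] [DecidableEq X]

/-- The `i`-th distance matrix of the graph `G` (indexed by `ℤ`; by convention it is
the zero matrix for `i < 0` and also for `i` larger than the diameter). -/
def distMat (G : SimpleGraph X) (i : ℤ) : Matrix X X ℂ :=
  Matrix.of fun y z => if (G.dist y z : ℤ) = i then (1 : ℂ) else 0

/-- The all-ones matrix `J`. -/
def allOnes (X : Type*) : Matrix X X ℂ := Matrix.of fun _ _ => (1 : ℂ)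

/-- The `i`-th dual idempotent `Eᵢ*` with respect to the base point `x`
(indexed by `ℤ`; zero for `i < 0` and for `i` larger than the diameter). -/
def dualIdem (G : SimpleGraph X) (x : X) (i : ℤ) : Matrix X X ℂ :=
  Matrix.of fun y z => if y = z ∧ (G.dist x y : ℤ) = i then (1 : ℂ) else 0

/-- The characteristic vector `sᵢ` of the `i`-th sphere around `x`. -/
def sphereVec (G : SimpleGraph X) (x : X) (i : ℤ) : X → ℂ :=
  fun y => if (G.dist x y : ℤ) = i then (1 : ℂ) else 0

/-- `G` is distance-regular with diameter `D` and intersection numbers `p h i j`: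
`G` is connected with diameter `D`, and for all `h,i,j ≤ D` and all vertices `y,z`
at distance `h`, the number of vertices `w` with `dist y w = i` and `dist w z = j`
equals `p h i j`. -/
def IsDRG (G : SimpleGraph X) (D : ℕ) (p : ℕ → ℕ → ℕ → ℕ) : Prop :=
  G.Connected ∧ (∀ y z : X, G.dist y z ≤ D) ∧ (∃ y z : X, G.dist y z = D) ∧
    ∀ h i j : ℕ, h ≤ D → i ≤ D → j ≤ D → ∀ y z : X, G.dist y z = h →
      (Finset.univ.filter fun w => G.dist y w = i ∧ G.dist w z = j).card = p h i j

/-- The Bose–Mesner algebra `M`, the subalgebra of `Mat_X(ℂ)` generated by the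
adjacency matrix. -/
def bmAlg (G : SimpleGraph X) : Subalgebra ℂ (Matrix X X ℂ) :=
  Algebra.adjoin ℂ {distMat G 1}

/-- The Terwilliger algebra `T`, generated by `A, E₀*, …, E_D*`. -/
def twAlg (G : SimpleGraph X) (x : X) (D : ℕ) : Subalgebra ℂ (Matrix X X ℂ) :=
  Algebra.adjoin ℂ ({distMat G 1} ∪ {B | ∃ i : ℕ, i ≤ D ∧ B = dualIdem G x (i : ℤ)})

/-- `W` is a `T`-module. -/
def IsTMod (G : SimpleGraph X) (x : X) (D : ℕ) (W : Submodule ℂ (X → ℂ)) : Prop :=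
  ∀ B ∈ twAlg G x D, ∀ w ∈ W, B.mulVec w ∈ W

/-- `W` is an irreducible `T`-module. -/
def IsIrredTMod (G : SimpleGraph X) (x : X) (D : ℕ) (W : Submodule ℂ (X → ℂ)) : Prop :=
  IsTMod G x D W ∧ W ≠ ⊥ ∧
    ∀ U : Submodule ℂ (X → ℂ), U ≤ W → IsTMod G x D U → U = ⊥ ∨ U = W

/-- `W` is thin: `dim Eᵢ* W ≤ 1` for `0 ≤ i ≤ D`. -/
def IsThin (G : SimpleGraph X) (x : X) (D : ℕ) (W : Submodule ℂ (X → ℂ)) : Prop :=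
  ∀ i : ℕ, i ≤ D → Module.finrank ℂ (W.map (dualIdem G x (i : ℤ)).mulVecLin) ≤ 1

/-- `W` has endpoint `1`, i.e. `E₀* W = 0` and `E₁* W ≠ 0`. -/
def HasEndpointOne (G : SimpleGraph X) (x : X) (W : Submodule ℂ (X → ℂ)) : Prop :=
  W.map (dualIdem G x 0).mulVecLin = ⊥ ∧ W.map (dualIdem G x 1).mulVecLin ≠ ⊥

/-- The linear map `P ↦ P v` on matrices. -/
def actOn (v : X → ℂ) : Matrix X X ℂ →ₗ[ℂ] (X → ℂ) where
  toFun P := P.mulVec v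
  map_add' P Q := Matrix.add_mulVec P Q v
  map_smul' c P := by simp [Matrix.smul_mulVec]

/-- The subspace `(M; v) = {P ∈ M : P v ∈ E_D* V}`. -/
def MsubV (G : SimpleGraph X) (x : X) (D : ℕ) (v : X → ℂ) : Submodule ℂ (Matrix X X ℂ) :=
  (bmAlg G).toSubmodule ⊓
    Submodule.comap (actOn v) (LinearMap.range (dualIdem G x (D : ℤ)).mulVecLin)

/-- The space `M(θ) = {Y ∈ M : (A - θI) Y ∈ ℂ A_D}` for `θ ∈ ℂ`. -/
def pseudoSpace (G : SimpleGraph X) (D : ℕ) (θ : ℂ) : Submodule ℂ (Matrix X X ℂ) :=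
  (bmAlg G).toSubmodule ⊓
    Submodule.comap (LinearMap.mulLeft ℂ (distMat G 1 - θ • 1))
      (Submodule.span ℂ {distMat G (D : ℤ)})


/-!
Every `Y ∈ M` is a combination `∑_{i ≤ D} cᵢ Aᵢ`, and `A Aᵢ = ∑_h p^h_{1i} A_h`. For `h < D`,
the entries of `(A - θI) Y` at distance `h` are `∑_i p^h_{1i} cᵢ - θ c_h`, so `Y ∈ M(θ)` forces
this to vanish. As `p^h_{1i} = 0` for `i > h + 1` and `p^h_{1,h+1} ≠ 0`, this recurrence determines
`c_{h+1}` from `c₀, …, c_h`; hence `Y ↦ c₀` is injective on `M(θ)` and `dim M(θ) ≤ 1`.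
Conversely `M(θ) ≠ 0`: it contains the kernel of `A - θI` on `M`, and if that kernel is trivial
then `A - θI` is invertible on the finite-dimensional `M`, so `A_D ∈ M` has a nonzero preimage.
-/

theorem SimpleGraph.Connected.exists_dist_eq_of_le {V : Type*} {G : SimpleGraph V}
    (hG : G.Connected) (y z : V) {h : ℕ} (hh : h ≤ G.dist y z) :
    ∃ w, G.dist y w = h ∧ G.dist w z = G.dist y z - h := by
  obtain ⟨q, hq⟩ := hG.exists_walk_length_eq_dist y z
  have hleft := SimpleGraph.dist_le (q.take h)
  have hright := SimpleGraph.dist_le (q.drop h)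
  have htri := hG.dist_triangle (u := y) (v := q.getVert h) (w := z)
  rw [SimpleGraph.Walk.take_length] at hleft
  rw [SimpleGraph.Walk.drop_length] at hright
  exact ⟨q.getVert h, by omega, by omega⟩

theorem Submodule.comap_span_singleton_ne_bot {K V : Type*} [Field K] [AddCommGroup V]
    [Module K V] [FiniteDimensional K V] (f : V →ₗ[K] V) {w : V} (hw : w ≠ 0) :
    (K ∙ w).comap f ≠ ⊥ := by
  intro hbot
  -- `ker f` lies in the comap, so `f` is injective, hence bijective, and `w` has a preimage
  have hinj : Function.Injective f := by
    rw [← LinearMap.ker_eq_bot, eq_bot_iff, ← hbot]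
    exact Submodule.comap_mono bot_le
  obtain ⟨v, rfl⟩ := LinearMap.injective_iff_surjective.mp hinj w
  have hv : v ∈ (K ∙ f v).comap f := Submodule.mem_span_singleton_self (f v)
  rw [hbot, Submodule.mem_bot] at hv
  exact hw (by rw [hv, map_zero])

theorem Submodule.finrank_eq_one_of_ne_bot_of_disjoint_ker {K V : Type*} [Field K]
    [AddCommGroup V] [Module K V] [FiniteDimensional K V] {S : Submodule K V} (hS : S ≠ ⊥)
    (f : V →ₗ[K] K) (hf : Disjoint S (LinearMap.ker f)) : Module.finrank K S = 1 := by
  have hinj : Function.Injective (f ∘ₗ S.subtype) := by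
    rw [← LinearMap.ker_eq_bot, LinearMap.ker_eq_bot']
    exact fun v hv => Subtype.ext (Submodule.disjoint_def.mp hf v v.2 hv)
  refine le_antisymm ?_ (Submodule.one_le_finrank_iff.mpr hS)
  simpa using LinearMap.finrank_le_finrank_of_injective hinj

theorem distMat_natCast_apply {V : Type*} (G : SimpleGraph V) (i : ℕ) (y z : V) :
    distMat G i y z = if G.dist y z = i then 1 else 0 := by
  simp [distMat]

theorem distMat_zero_eq_one {V : Type*} [DecidableEq V] {G : SimpleGraph V}
    (hG : G.Connected) : distMat G 0 = 1 := by
  ext y z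
  simp [distMat, Matrix.one_apply, hG.dist_eq_zero_iff]

def distLinComb {V : Type*} (G : SimpleGraph V) (D : ℕ) : (ℕ → ℂ) →ₗ[ℂ] Matrix V V ℂ :=
  ∑ i ∈ Finset.range (D + 1), (LinearMap.proj i).smulRight (distMat G i)

theorem distLinComb_apply {V : Type*} (G : SimpleGraph V) (D : ℕ) (c : ℕ → ℂ) :
    distLinComb G D c = ∑ i ∈ Finset.range (D + 1), c i • distMat G i := by
  simp [distLinComb]

theorem distLinComb_single {V : Type*} (G : SimpleGraph V) {D i : ℕ} (hi : i ≤ D) :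
    distLinComb G D (Pi.single i 1) = distMat G i := by
  rw [distLinComb_apply, Finset.sum_eq_single_of_mem i (Finset.mem_range.mpr (by omega))]
  · simp
  · intro j _ hji
    simp [hji]

theorem mem_pseudoSpace_iff {V : Type*} [Fintype V] [DecidableEq V] {G : SimpleGraph V} {D : ℕ}
    {θ : ℂ} {Y : Matrix V V ℂ} :
    Y ∈ pseudoSpace G D θ ↔
      Y ∈ bmAlg G ∧ ∃ t : ℂ, t • distMat G D = (distMat G 1 - θ • 1) * Y := by
  simp [pseudoSpace, Submodule.mem_span_singleton]

namespace IsDRG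

variable {V : Type*} [Fintype V] {G : SimpleGraph V} {D : ℕ} {p : ℕ → ℕ → ℕ → ℕ}

theorem exists_dist_eq (hdrg : IsDRG G D p) {h : ℕ} (hh : h ≤ D) :
    ∃ y z : V, G.dist y z = h := by
  obtain ⟨y, z, hyz⟩ := hdrg.2.2.1
  obtain ⟨w, hw, -⟩ := hdrg.1.exists_dist_eq_of_le y z (hyz ▸ hh)
  exact ⟨y, w, hw⟩

theorem card_adj_dist_eq (hdrg : IsDRG G D p) (hD : 1 ≤ D) {i : ℕ} (hi : i ≤ D) (y z : V) :
    (Finset.univ.filter fun w => G.dist y w = 1 ∧ G.dist w z = i).card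
      = p (G.dist y z) 1 i :=
  hdrg.2.2.2 _ 1 i (hdrg.2.1 y z) hD hi y z rfl

theorem p_one_eq_zero (hdrg : IsDRG G D p) (hD : 1 ≤ D) {h i : ℕ} (hh : h ≤ D) (hi : i ≤ D)
    (hfar : h + 1 < i ∨ i + 1 < h) : p h 1 i = 0 := by
  obtain ⟨y, z, rfl⟩ := hdrg.exists_dist_eq hh
  rw [← hdrg.card_adj_dist_eq hD hi, Finset.card_eq_zero, Finset.filter_eq_empty_iff]
  rintro w - ⟨hyw, hwz⟩
  have := hdrg.1.dist_triangle (u := y) (v := w) (w := z)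
  have := hdrg.1.dist_triangle (u := w) (v := y) (w := z)
  have := G.dist_comm (u := y) (v := w)
  omega

theorem p_one_pos (hdrg : IsDRG G D p) (hD : 1 ≤ D) {h : ℕ} (hh : h + 1 ≤ D) :
    0 < p h 1 (h + 1) ∧ 0 < p (h + 1) 1 h := by
  -- the neighbour `w` of `y` on a geodesic from `y` to `z` is counted by both numbers
  obtain ⟨y, z, hyz⟩ := hdrg.exists_dist_eq hh
  obtain ⟨w, hyw, hwz⟩ := hdrg.1.exists_dist_eq_of_le y z (h := 1) (by omega)
  rw [hyz, Nat.add_sub_cancel] at hwz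
  have hcount_w := hdrg.card_adj_dist_eq hD hh w z
  have hcount_y := hdrg.card_adj_dist_eq hD (i := h) (by omega) y z
  rw [hwz] at hcount_w
  rw [hyz] at hcount_y
  rw [← hcount_w, ← hcount_y, Finset.card_pos, Finset.card_pos]
  exact ⟨⟨y, by simp [G.dist_comm, hyw, hyz]⟩, ⟨w, by simp [hyw, hwz]⟩⟩

theorem distLinComb_apply_apply (hdrg : IsDRG G D p) (c : ℕ → ℂ) (y z : V) :
    distLinComb G D c y z = c (G.dist y z) := by
  have hyz : G.dist y z ∈ Finset.range (D + 1) :=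
    Finset.mem_range.mpr (Nat.lt_succ_of_le (hdrg.2.1 y z))
  simp [distLinComb_apply, Matrix.sum_apply, distMat_natCast_apply, hyz]

theorem distMat_ne_zero (hdrg : IsDRG G D p) {i : ℕ} (hi : i ≤ D) : distMat G i ≠ 0 := by
  obtain ⟨y, z, hyz⟩ := hdrg.exists_dist_eq hi
  intro h
  simpa [distMat_natCast_apply, hyz] using congrFun (congrFun h y) z

theorem distMat_one_mul_distMat (hdrg : IsDRG G D p) (hD : 1 ≤ D) {i : ℕ} (hi : i ≤ D) :
    distMat G 1 * distMat G i = distLinComb G D (fun h => p h 1 i) := by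
  ext y z
  rw [distLinComb_apply_apply hdrg, ← hdrg.card_adj_dist_eq hD hi, Matrix.mul_apply]
  simp only [distMat, Matrix.of_apply, Nat.cast_eq_one, Nat.cast_inj, ← ite_and, mul_ite,
    mul_one, mul_zero, Finset.sum_boole]
  exact congrArg _ (Finset.filter_congr fun _ _ => and_comm)

theorem distMat_one_mul_distLinComb (hdrg : IsDRG G D p) (hD : 1 ≤ D) (c : ℕ → ℂ) :
    distMat G 1 * distLinComb G D c
      = distLinComb G D (fun h => ∑ i ∈ Finset.range (D + 1), p h 1 i * c i) := by
  ext y z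
  simp only [distLinComb_apply G D c, Matrix.mul_sum, Matrix.mul_smul, Matrix.sum_apply,
    Matrix.smul_apply, distLinComb_apply_apply hdrg]
  refine Finset.sum_congr rfl fun i hi => ?_
  rw [hdrg.distMat_one_mul_distMat hD (Nat.lt_succ_iff.mp (Finset.mem_range.mp hi)),
    distLinComb_apply_apply hdrg, smul_eq_mul, mul_comm]

theorem eq_zero_of_recurrence (hdrg : IsDRG G D p) (hD : 1 ≤ D) {θ : ℂ} {c : ℕ → ℂ}
    (hc0 : c 0 = 0) (hrec : ∀ h < D, ∑ i ∈ Finset.range (D + 1), p h 1 i * c i = θ * c h) :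
    ∀ h ≤ D, c h = 0 := by
  intro h
  induction h using Nat.strong_induction_on with
  | _ h ih =>
  intro hh
  cases h with
  | zero => exact hc0
  | succ k =>
    -- in the recurrence at `k` only the term `i = k + 1` survives
    have hk := hrec k (by omega)
    rw [ih k (by omega) (by omega), mul_zero, Finset.sum_eq_single (k + 1)] at hk
    · have hpos : (p k 1 (k + 1) : ℂ) ≠ 0 := by exact_mod_cast (hdrg.p_one_pos hD hh).1.ne'
      exact (mul_eq_zero.mp hk).resolve_left hpos
    · intro i hi hne
      rcases le_or_gt i k with hle | hgt
      · rw [ih i (by omega) (by omega), mul_zero]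
      · rw [hdrg.p_one_eq_zero hD (by omega) (Nat.lt_succ_iff.mp (Finset.mem_range.mp hi))
          (by omega), Nat.cast_zero, zero_mul]
    · exact fun hnot => absurd (Finset.mem_range.mpr (by omega)) hnot

variable [DecidableEq V]

theorem distMat_mem_bmAlg (hdrg : IsDRG G D p) (hD : 1 ≤ D) {i : ℕ} (hi : i ≤ D) :
    distMat G i ∈ bmAlg G := by
  induction i using Nat.strong_induction_on with
  | _ i ih =>
  cases i with
  | zero => simp [distMat_zero_eq_one hdrg.1]
  | succ k =>
    -- `A Aₖ = p (k+1) 1 k • Aₖ₊₁ + ∑_{h ≤ k} p h 1 k • Aₕ`, with `p (k+1) 1 k ≠ 0`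
    have hprod := hdrg.distMat_one_mul_distMat hD (i := k) (by omega)
    rw [distLinComb_apply,
      ← Finset.add_sum_erase _ _ (Finset.mem_range.mpr (by omega : k + 1 < D + 1))] at hprod
    have hrest : ∑ h ∈ (Finset.range (D + 1)).erase (k + 1), (p h 1 k : ℂ) • distMat G h
        ∈ bmAlg G := by
      refine sum_mem fun h hh => ?_
      obtain ⟨hne, hh⟩ := Finset.mem_erase.mp hh
      have hhD := Finset.mem_range.mp hh
      rcases le_or_gt h k with hle | hgt
      · exact Subalgebra.smul_mem _ (ih h (by omega) (by omega)) _
      · rw [hdrg.p_one_eq_zero hD (by omega) (by omega) (by omega), Nat.cast_zero, zero_smul]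
        exact zero_mem _
    have hAk : distMat G 1 * distMat G k ∈ bmAlg G :=
      mul_mem (Algebra.subset_adjoin rfl) (ih k (by omega) (by omega))
    rw [hprod] at hAk
    have hlead := sub_mem hAk hrest
    rw [add_sub_cancel_right] at hlead
    replace hlead := Subalgebra.smul_mem _ hlead ((p (k + 1) 1 k : ℂ)⁻¹)
    have hpos : (p (k + 1) 1 k : ℂ) ≠ 0 := by exact_mod_cast (hdrg.p_one_pos hD hi).2.ne'
    rwa [smul_smul, inv_mul_cancel₀ hpos, one_smul] at hlead

theorem bmAlg_le_range_distLinComb (hdrg : IsDRG G D p) (hD : 1 ≤ D) :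
    (bmAlg G).toSubmodule ≤ LinearMap.range (distLinComb G D) := by
  intro Y hY
  rw [Subalgebra.mem_toSubmodule, bmAlg, Algebra.adjoin_singleton_eq_range_aeval] at hY
  obtain ⟨q, rfl⟩ := (AlgHom.mem_range _).mp hY
  have hpow : ∀ n, distMat G 1 ^ n ∈ LinearMap.range (distLinComb G D) := by
    intro n
    induction n with
    | zero =>
      refine ⟨Pi.single 0 1, ?_⟩
      rw [distLinComb_single G (Nat.zero_le D), Nat.cast_zero, distMat_zero_eq_one hdrg.1,
        pow_zero]
    | succ n ih =>
      obtain ⟨c, hc⟩ := ih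
      rw [pow_succ', ← hc, hdrg.distMat_one_mul_distLinComb hD]
      exact LinearMap.mem_range_self _ _
  rw [Polynomial.aeval_eq_sum_range]
  exact sum_mem fun n _ => Submodule.smul_mem _ _ (hpow n)

theorem eq_zero_of_mem_pseudoSpace (hdrg : IsDRG G D p) (hD : 1 ≤ D) {θ : ℂ}
    {Y : Matrix V V ℂ} (hY : Y ∈ pseudoSpace G D θ) (x : V) (hx : Y x x = 0) : Y = 0 := by
  obtain ⟨hYM, t, ht⟩ := mem_pseudoSpace_iff.mp hY
  obtain ⟨c, rfl⟩ := hdrg.bmAlg_le_range_distLinComb hD hYM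
  have hc0 : c 0 = 0 := by rwa [hdrg.distLinComb_apply_apply, G.dist_self] at hx
  have hrec : ∀ h < D, ∑ i ∈ Finset.range (D + 1), p h 1 i * c i = θ * c h := by
    intro h hh
    obtain ⟨y, z, rfl⟩ := hdrg.exists_dist_eq hh.le
    have hyz := congrFun (congrFun ht y) z
    simp [Matrix.sub_mul, hdrg.distMat_one_mul_distLinComb hD, hdrg.distLinComb_apply_apply,
      distMat_natCast_apply, hh.ne] at hyz
    linear_combination -hyz
  ext y z
  rw [hdrg.distLinComb_apply_apply, hdrg.eq_zero_of_recurrence hD hc0 hrec _ (hdrg.2.1 y z),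
    Matrix.zero_apply]

theorem pseudoSpace_ne_bot (hdrg : IsDRG G D p) (hD : 1 ≤ D) (θ : ℂ) :
    pseudoSpace G D θ ≠ ⊥ := by
  have hA : distMat G 1 - θ • 1 ∈ bmAlg G :=
    sub_mem (Algebra.subset_adjoin rfl) (Subalgebra.smul_mem _ (one_mem _) θ)
  have hmul : ∀ Y ∈ (bmAlg G).toSubmodule,
      (distMat G 1 - θ • 1) * Y ∈ (bmAlg G).toSubmodule :=
    fun _ hY => Subalgebra.mul_mem _ hA hY
  have hAD := hdrg.distMat_mem_bmAlg hD le_rfl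
  obtain ⟨Y, hY, hY0⟩ := (Submodule.ne_bot_iff _).mp <|
    Submodule.comap_span_singleton_ne_bot ((LinearMap.mulLeft ℂ _).restrict hmul)
      (w := ⟨distMat G D, hAD⟩) fun h => hdrg.distMat_ne_zero le_rfl (congrArg Subtype.val h)
  obtain ⟨t, ht⟩ := Submodule.mem_span_singleton.mp hY
  refine (Submodule.ne_bot_iff _).mpr ⟨Y, mem_pseudoSpace_iff.mpr ⟨Y.2, t, ?_⟩, ?_⟩
  · exact congrArg Subtype.val ht
  · simpa using hY0

end IsDRG

/-- For every `θ ∈ ℂ` the subspace `M(θ)` has dimension 1; moreover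
`M(∞) = ℂ A_D` has dimension 1. -/
theorem stmt10 (G : SimpleGraph X) (D : ℕ) (p : ℕ → ℕ → ℕ → ℕ)
    (hdrg : IsDRG G D p) (hD : 3 ≤ D) :
    (∀ θ : ℂ, Module.finrank ℂ (pseudoSpace G D θ) = 1) ∧
      Module.finrank ℂ (Submodule.span ℂ {distMat G (D : ℤ)}) = 1 := by
  obtain ⟨x, -, -⟩ := hdrg.2.2.1
  refine ⟨fun θ => ?_, finrank_span_singleton (hdrg.distMat_ne_zero le_rfl)⟩
  refine Submodule.finrank_eq_one_of_ne_bot_of_disjoint_ker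
    (hdrg.pseudoSpace_ne_bot (by omega) θ) (Matrix.entryLinearMap ℂ ℂ x x) ?_
  exact Submodule.disjoint_def.mpr fun Y hY hx => hdrg.eq_zero_of_mem_pseudoSpace (by omega) hY x hx
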